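/- arXiv:2410.21994 — 2 statements merged into one kernel-verified Lean document; each statement's English description precedes it below -/
import Mathlib

section
/- For every smooth u : Ω → ℂ the Teukolsky operators factor through the first Chandrasekhar transformation: 𝔗⁽⁺²⁾u = −w·( L(w⁻¹L̲u) − (w′/w)(w⁻¹L̲u) + (𝓛⁽⁺²⁾ − 2 + 6M/r)u ) and 𝔗⁽⁻²⁾u = −w·( L̲(w⁻¹Lu) + (w′/w)(w⁻¹Lu) + (𝓛⁽⁻²⁾ − 2 + 6M/r)u ) hold at every point of Ω. -/
/- Schwarzschild-Anti-de Sitter background: basic operators on functions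
   u(t, r, ϑ, φ) with values in ℂ. -/

noncomputable section

open Filter Topology Set

namespace Grav

abbrev F4 : Type := ℝ → ℝ → ℝ → ℝ → ℂ

/-- `Δ(r) = r² + k²r⁴ − 2Mr`. -/
def Del (M k r : ℝ) : ℝ := r ^ 2 + k ^ 2 * r ^ 4 - 2 * M * r

/-- `∂ₜ`. -/
def dT (u : F4) : F4 := fun t r ϑ φ => deriv (fun s => u s r ϑ φ) t
/-- `∂ᵣ`. -/
def dR (u : F4) : F4 := fun t r ϑ φ => deriv (fun s => u t s ϑ φ) r
/-- `∂_ϑ`. -/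
def dTh (u : F4) : F4 := fun t r ϑ φ => deriv (fun s => u t r s φ) ϑ
/-- `∂_φ`. -/
def dPh (u : F4) : F4 := fun t r ϑ φ => deriv (fun s => u t r ϑ s) φ

/-- `L u = ∂ₜ u + (Δ/r²) ∂ᵣ u`. -/
def opL (M k : ℝ) (u : F4) : F4 := fun t r ϑ φ =>
  dT u t r ϑ φ + ((Del M k r / r ^ 2 : ℝ) : ℂ) * dR u t r ϑ φ

/-- `L̲ u = ∂ₜ u − (Δ/r²) ∂ᵣ u`. -/
def opLb (M k : ℝ) (u : F4) : F4 := fun t r ϑ φ =>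
  dT u t r ϑ φ - ((Del M k r / r ^ 2 : ℝ) : ℂ) * dR u t r ϑ φ

/-- `w = Δ/r⁴`. -/
def ww (M k r : ℝ) : ℝ := Del M k r / r ^ 4
/-- `w′ = w·(6M − 2r)/r²`. -/
def wwP (M k r : ℝ) : ℝ := ww M k r * (6 * M - 2 * r) / r ^ 2

/-- The angular operator `𝓛⁽⁺²⁾`. -/
def angP (u : F4) : F4 := fun t r ϑ φ =>
  -(Real.sin ϑ : ℂ)⁻¹ * deriv (fun x => (Real.sin x : ℂ) * dTh u t r x φ) ϑ
  - (((Real.sin ϑ) ^ 2 : ℝ) : ℂ)⁻¹ * dPh (dPh u) t r ϑ φ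
  - 4 * Complex.I * ((Real.cos ϑ / (Real.sin ϑ) ^ 2 : ℝ) : ℂ) * dPh u t r ϑ φ
  + 4 * (((Real.cos ϑ / Real.sin ϑ) ^ 2 : ℝ) : ℂ) * u t r ϑ φ
  + 4 * u t r ϑ φ

/-- The angular operator `𝓛⁽⁻²⁾`. -/
def angM (u : F4) : F4 := fun t r ϑ φ =>
  -(Real.sin ϑ : ℂ)⁻¹ * deriv (fun x => (Real.sin x : ℂ) * dTh u t r x φ) ϑ
  - (((Real.sin ϑ) ^ 2 : ℝ) : ℂ)⁻¹ * dPh (dPh u) t r ϑ φ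
  + 4 * Complex.I * ((Real.cos ϑ / (Real.sin ϑ) ^ 2 : ℝ) : ℂ) * dPh u t r ϑ φ
  + 4 * (((Real.cos ϑ / Real.sin ϑ) ^ 2 : ℝ) : ℂ) * u t r ϑ φ
  + 4 * u t r ϑ φ

/-- The Teukolsky operator `𝔗⁽⁺²⁾u = −LL̲u + 2(w′/w)L̲u − w(𝓛⁽⁺²⁾ − 2 + 6M/r)u`. -/
def Tp (M k : ℝ) (u : F4) : F4 := fun t r ϑ φ =>
  - opL M k (opLb M k u) t r ϑ φ
  + 2 * ((wwP M k r / ww M k r : ℝ) : ℂ) * opLb M k u t r ϑ φ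
  - ((ww M k r : ℝ) : ℂ) *
      (angP u t r ϑ φ - 2 * u t r ϑ φ + ((6 * M / r : ℝ) : ℂ) * u t r ϑ φ)

/-- The Teukolsky operator `𝔗⁽⁻²⁾u = −LL̲u − 2(w′/w)Lu − w(𝓛⁽⁻²⁾ − 2 + 6M/r)u`. -/
def Tm (M k : ℝ) (u : F4) : F4 := fun t r ϑ φ =>
  - opL M k (opLb M k u) t r ϑ φ
  - 2 * ((wwP M k r / ww M k r : ℝ) : ℂ) * opL M k u t r ϑ φ
  - ((ww M k r : ℝ) : ℂ) *
      (angM u t r ϑ φ - 2 * u t r ϑ φ + ((6 * M / r : ℝ) : ℂ) * u t r ϑ φ)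

/-- The Regge–Wheeler operator `𝕽⁽⁺²⁾u = −LL̲u − w(𝓛⁽⁺²⁾ − 6M/r)u`. -/
def RWp (M k : ℝ) (u : F4) : F4 := fun t r ϑ φ =>
  - opL M k (opLb M k u) t r ϑ φ
  - ((ww M k r : ℝ) : ℂ) * (angP u t r ϑ φ - ((6 * M / r : ℝ) : ℂ) * u t r ϑ φ)

/-- The Regge–Wheeler operator `𝕽⁽⁻²⁾u = −LL̲u − w(𝓛⁽⁻²⁾ − 6M/r)u`. -/
def RWm (M k : ℝ) (u : F4) : F4 := fun t r ϑ φ =>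
  - opL M k (opLb M k u) t r ϑ φ
  - ((ww M k r : ℝ) : ℂ) * (angM u t r ϑ φ - ((6 * M / r : ℝ) : ℂ) * u t r ϑ φ)

/-- The exterior region `Ω = {r > r₊, 0 < ϑ < π}` (as a subset of ℝ⁴). -/
def OmSet (rp : ℝ) : Set (ℝ × ℝ × ℝ × ℝ) :=
  {p | rp < p.2.1 ∧ 0 < p.2.2.1 ∧ p.2.2.1 < Real.pi}

/-- `u` is smooth on `Ω`. -/
def SmoothOnOm (rp : ℝ) (u : F4) : Prop :=
  ContDiffOn ℝ (⊤ : ℕ∞)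
    (fun p : ℝ × ℝ × ℝ × ℝ => u p.1 p.2.1 p.2.2.1 p.2.2.2) (OmSet rp)

/-- Multiplication by `w⁻¹`. -/
def winv (M k : ℝ) (u : F4) : F4 := fun t r ϑ φ => ((ww M k r : ℝ) : ℂ)⁻¹ * u t r ϑ φ
/-- Multiplication by `w`. -/
def wmul (M k : ℝ) (u : F4) : F4 := fun t r ϑ φ => ((ww M k r : ℝ) : ℂ) * u t r ϑ φ
/-- Pointwise complex conjugation. -/
def conjF (u : F4) : F4 := fun t r ϑ φ => (starRingEnd ℂ) (u t r ϑ φ)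

/-- `𝓛⁽⁺²⁾(𝓛⁽⁺²⁾ − 2)`. -/
def angSqP (u : F4) : F4 := angP (fun t r ϑ φ => angP u t r ϑ φ - 2 * u t r ϑ φ)
/-- `𝓛⁽⁻²⁾(𝓛⁽⁻²⁾ − 2)`. -/
def angSqM (u : F4) : F4 := angM (fun t r ϑ φ => angM u t r ϑ φ - 2 * u t r ϑ φ)

/-- `𝓛⁽⁺²⁾(𝓛⁽⁺²⁾ − 2) + 12M∂ₜ`. -/
def TSp (M : ℝ) (u : F4) : F4 := fun t r ϑ φ =>
  angSqP u t r ϑ φ + 12 * (M : ℂ) * dT u t r ϑ φ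
/-- `𝓛⁽⁻²⁾(𝓛⁽⁻²⁾ − 2) − 12M∂ₜ`. -/
def TSm (M : ℝ) (u : F4) : F4 := fun t r ϑ φ =>
  angSqM u t r ϑ φ - 12 * (M : ℂ) * dT u t r ϑ φ

/-!
Since `w` depends only on `r` and `(Δ/r²) ∂ᵣw = w′`, the Leibniz rule gives
`L(w⁻¹v) = w⁻¹(Lv − (w′/w)v)` and `L̲(w⁻¹v) = w⁻¹(L̲v + (w′/w)v)`. With `v = L̲u`, resp. `v = Lu`,
both identities become algebra, once `LL̲u = L̲Lu` is known for the second one: this holds because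
`Δ/r²` does not depend on `t` and the mixed partials `∂ₜ∂ᵣu`, `∂ᵣ∂ₜu` of a smooth `u` agree.
On `r > r₊` we have `Δ > 0`, so `w` is invertible.
-/

end Grav

section Slices

variable {E F : Type*} [NormedAddCommGroup E] [NormedSpace ℝ E]
  [NormedAddCommGroup F] [NormedSpace ℝ F]

theorem HasFDerivAt.comp_prodMk_left {g : ℝ × ℝ → F} {g' : ℝ × ℝ →L[ℝ] F} {a b : ℝ}
    (h : HasFDerivAt g g' (a, b)) : HasDerivAt (fun x => g (x, b)) (g' (1, 0)) a :=
  h.comp_hasDerivAt a ((hasDerivAt_id a).prodMk (hasDerivAt_const a b))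

theorem HasFDerivAt.comp_prodMk_right {g : ℝ × ℝ → F} {g' : ℝ × ℝ →L[ℝ] F} {a b : ℝ}
    (h : HasFDerivAt g g' (a, b)) : HasDerivAt (fun y => g (a, y)) (g' (0, 1)) b :=
  h.comp_hasDerivAt b ((hasDerivAt_const b a).prodMk (hasDerivAt_id b))

theorem ContDiffAt.hasFDerivAt_fderiv_apply {f : E → F} {x : E} (hf : ContDiffAt ℝ 2 f x)
    (v : E) :
    HasFDerivAt (fun y => fderiv ℝ f y v)
      ((ContinuousLinearMap.apply ℝ F v).comp (fderiv ℝ (fderiv ℝ f) x)) x :=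
  (ContinuousLinearMap.apply ℝ F v).hasFDerivAt.comp x
    ((hf.fderiv_right (m := 1) (by norm_num)).differentiableAt (by norm_num)).hasFDerivAt

variable {f : ℝ × ℝ → F} {a b : ℝ}

theorem ContDiffAt.hasFDerivAt_deriv_fst (hf : ContDiffAt ℝ 2 f (a, b)) :
    HasFDerivAt (fun q : ℝ × ℝ => deriv (fun x => f (x, q.2)) q.1)
      ((ContinuousLinearMap.apply ℝ F (1, 0)).comp (fderiv ℝ (fderiv ℝ f) (a, b))) (a, b) := by
  refine (hf.hasFDerivAt_fderiv_apply (1, 0)).congr_of_eventuallyEq ?_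
  filter_upwards [hf.eventually (by simp)] with q hq
  exact (hq.differentiableAt (by norm_num)).hasFDerivAt.comp_prodMk_left.deriv

theorem ContDiffAt.hasFDerivAt_deriv_snd (hf : ContDiffAt ℝ 2 f (a, b)) :
    HasFDerivAt (fun q : ℝ × ℝ => deriv (fun y => f (q.1, y)) q.2)
      ((ContinuousLinearMap.apply ℝ F (0, 1)).comp (fderiv ℝ (fderiv ℝ f) (a, b))) (a, b) := by
  refine (hf.hasFDerivAt_fderiv_apply (0, 1)).congr_of_eventuallyEq ?_
  filter_upwards [hf.eventually (by simp)] with q hq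
  exact (hq.differentiableAt (by norm_num)).hasFDerivAt.comp_prodMk_right.deriv

theorem ContDiffAt.deriv_deriv_comm (hf : ContDiffAt ℝ 2 f (a, b)) :
    deriv (fun x => deriv (fun y => f (x, y)) b) a
      = deriv (fun y => deriv (fun x => f (x, y)) a) b := by
  rw [hf.hasFDerivAt_deriv_snd.comp_prodMk_left.deriv,
    hf.hasFDerivAt_deriv_fst.comp_prodMk_right.deriv]
  exact hf.isSymmSndFDerivAt (by simp) _ _

end Slices

namespace Grav

lemma isOpen_OmSet (rp : ℝ) : IsOpen (OmSet rp) := by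
  have hr : Continuous fun p : ℝ × ℝ × ℝ × ℝ => p.2.1 := by fun_prop
  have hϑ : Continuous fun p : ℝ × ℝ × ℝ × ℝ => p.2.2.1 := by fun_prop
  exact (isOpen_lt continuous_const hr).inter
    ((isOpen_lt continuous_const hϑ).inter (isOpen_lt hϑ continuous_const))

lemma SmoothOnOm.contDiffAt_slice {rp : ℝ} {u : F4} (hu : SmoothOnOm rp u) {t r ϑ φ : ℝ}
    (hp : (t, r, ϑ, φ) ∈ OmSet rp) :
    ContDiffAt ℝ 2 (fun q : ℝ × ℝ => u q.1 q.2 ϑ φ) (t, r) := by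
  have hU : ContDiffAt ℝ 2 (fun p : ℝ × ℝ × ℝ × ℝ => u p.1 p.2.1 p.2.2.1 p.2.2.2)
      ((fun q : ℝ × ℝ => (q.1, q.2, ϑ, φ)) (t, r)) :=
    (hu.contDiffAt ((isOpen_OmSet rp).mem_nhds hp)).of_le (WithTop.coe_le_coe.mpr le_top)
  exact hU.comp (f := fun q : ℝ × ℝ => (q.1, q.2, ϑ, φ)) (t, r) (by fun_prop)

lemma hasDerivAt_Del (M k r : ℝ) :
    HasDerivAt (Del M k) (2 * r + 4 * k ^ 2 * r ^ 3 - 2 * M) r := by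
  refine (((hasDerivAt_pow 2 r).add ((hasDerivAt_pow 4 r).const_mul (k ^ 2))).sub
    ((hasDerivAt_id r).const_mul (2 * M))).congr_deriv ?_
  push_cast; ring

lemma hasDerivAt_ww (M k : ℝ) {r : ℝ} (hr : r ≠ 0) :
    HasDerivAt (ww M k) ((6 * M - 2 * r) / r ^ 4) r := by
  refine ((hasDerivAt_Del M k r).div (hasDerivAt_pow 4 r) (pow_ne_zero 4 hr)).congr_deriv ?_
  unfold Del; field_simp; ring

lemma differentiableAt_Del_div_sq (M k : ℝ) {r : ℝ} (hr : r ≠ 0) :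
    DifferentiableAt ℝ (fun s : ℝ => ((Del M k s / s ^ 2 : ℝ) : ℂ)) r :=
  ((hasDerivAt_Del M k r).div (hasDerivAt_pow 2 r) (pow_ne_zero 2 hr)).ofReal_comp.differentiableAt

lemma ww_pos {M k rp r : ℝ} (hrp : 0 < rp) (hroot : rp + k ^ 2 * rp ^ 3 - 2 * M = 0)
    (hr : rp < r) : 0 < ww M k r := by
  have hr0 : 0 < r := hrp.trans hr
  have hcube : rp ^ 3 < r ^ 3 := pow_lt_pow_left₀ hr hrp.le (by norm_num)
  have hgap : 0 < r + k ^ 2 * r ^ 3 - 2 * M := by nlinarith [sq_nonneg k]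
  have hDel : Del M k r = r * (r + k ^ 2 * r ^ 3 - 2 * M) := by unfold Del; ring
  unfold ww; rw [hDel]; positivity

lemma opL_apply (M k : ℝ) (v : F4) (t r ϑ φ : ℝ) :
    opL M k v t r ϑ φ = dT v t r ϑ φ + ((Del M k r / r ^ 2 : ℝ) : ℂ) * dR v t r ϑ φ := rfl

lemma opLb_apply (M k : ℝ) (v : F4) (t r ϑ φ : ℝ) :
    opLb M k v t r ϑ φ = dT v t r ϑ φ - ((Del M k r / r ^ 2 : ℝ) : ℂ) * dR v t r ϑ φ := rfl

lemma winv_apply (M k : ℝ) (v : F4) (t r ϑ φ : ℝ) :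
    winv M k v t r ϑ φ = ((ww M k r : ℝ) : ℂ)⁻¹ * v t r ϑ φ := rfl

section Operators

variable {M k rp : ℝ} {u v : F4} {t r ϑ φ : ℝ}

lemma SmoothOnOm.differentiableAt_opL (hu : SmoothOnOm rp u) (hp : (t, r, ϑ, φ) ∈ OmSet rp)
    (hr : r ≠ 0) : DifferentiableAt ℝ (fun s => opL M k u t s ϑ φ) r :=
  have hg := hu.contDiffAt_slice hp
  hg.hasFDerivAt_deriv_fst.comp_prodMk_right.differentiableAt.add
    ((differentiableAt_Del_div_sq M k hr).mul
      hg.hasFDerivAt_deriv_snd.comp_prodMk_right.differentiableAt)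

lemma SmoothOnOm.differentiableAt_opLb (hu : SmoothOnOm rp u) (hp : (t, r, ϑ, φ) ∈ OmSet rp)
    (hr : r ≠ 0) : DifferentiableAt ℝ (fun s => opLb M k u t s ϑ φ) r :=
  have hg := hu.contDiffAt_slice hp
  hg.hasFDerivAt_deriv_fst.comp_prodMk_right.differentiableAt.sub
    ((differentiableAt_Del_div_sq M k hr).mul
      hg.hasFDerivAt_deriv_snd.comp_prodMk_right.differentiableAt)

lemma opL_opLb_comm (hu : SmoothOnOm rp u) (hp : (t, r, ϑ, φ) ∈ OmSet rp) (hr : r ≠ 0) :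
    opL M k (opLb M k u) t r ϑ φ = opLb M k (opL M k u) t r ϑ φ := by
  have hg := hu.contDiffAt_slice hp
  have hTt : DifferentiableAt ℝ (fun s => dT u s r ϑ φ) t :=
    hg.hasFDerivAt_deriv_fst.comp_prodMk_left.differentiableAt
  have hRt : DifferentiableAt ℝ (fun s => dR u s r ϑ φ) t :=
    hg.hasFDerivAt_deriv_snd.comp_prodMk_left.differentiableAt
  have hTr : DifferentiableAt ℝ (fun s => dT u t s ϑ φ) r :=
    hg.hasFDerivAt_deriv_fst.comp_prodMk_right.differentiableAt
  have hRr : DifferentiableAt ℝ (fun s => dR u t s ϑ φ) r :=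
    hg.hasFDerivAt_deriv_snd.comp_prodMk_right.differentiableAt
  have hc := (differentiableAt_Del_div_sq M k hr).hasDerivAt
  set c : ℂ := ((Del M k r / r ^ 2 : ℝ) : ℂ)
  have hTLb : dT (opLb M k u) t r ϑ φ = dT (dT u) t r ϑ φ - c * dT (dR u) t r ϑ φ :=
    (hTt.hasDerivAt.sub (hRt.hasDerivAt.const_mul c)).deriv
  have hTL : dT (opL M k u) t r ϑ φ = dT (dT u) t r ϑ φ + c * dT (dR u) t r ϑ φ :=
    (hTt.hasDerivAt.add (hRt.hasDerivAt.const_mul c)).deriv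
  have hRLb : dR (opLb M k u) t r ϑ φ = dR (dT u) t r ϑ φ
      - (deriv (fun s : ℝ => ((Del M k s / s ^ 2 : ℝ) : ℂ)) r * dR u t r ϑ φ
        + c * dR (dR u) t r ϑ φ) :=
    (hTr.hasDerivAt.sub (hc.mul hRr.hasDerivAt)).deriv
  have hRL : dR (opL M k u) t r ϑ φ = dR (dT u) t r ϑ φ
      + (deriv (fun s : ℝ => ((Del M k s / s ^ 2 : ℝ) : ℂ)) r * dR u t r ϑ φ
        + c * dR (dR u) t r ϑ φ) :=
    (hTr.hasDerivAt.add (hc.mul hRr.hasDerivAt)).deriv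
  have hsym : dT (dR u) t r ϑ φ = dR (dT u) t r ϑ φ := hg.deriv_deriv_comm
  rw [opL_apply, opLb_apply, hTLb, hTL, hRLb, hRL, hsym]
  ring

lemma hasDerivAt_ww_inv (M k : ℝ) (hr : r ≠ 0) (hw : ww M k r ≠ 0) :
    HasDerivAt (fun s : ℝ => ((ww M k s : ℝ) : ℂ)⁻¹)
      (-(((6 * M - 2 * r) / r ^ 4 : ℝ) : ℂ) / ((ww M k r : ℝ) : ℂ) ^ 2) r :=
  (hasDerivAt_ww M k hr).ofReal_comp.fun_inv (by exact_mod_cast hw)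

lemma Del_div_sq_mul_deriv_ww (M k r : ℝ) :
    ((Del M k r / r ^ 2 : ℝ) : ℂ) * (((6 * M - 2 * r) / r ^ 4 : ℝ) : ℂ)
      = ((wwP M k r : ℝ) : ℂ) := by
  rw [← Complex.ofReal_mul]; unfold wwP ww; ring_nf

lemma dT_winv (M k : ℝ) (v : F4) (t r ϑ φ : ℝ) :
    dT (winv M k v) t r ϑ φ = ((ww M k r : ℝ) : ℂ)⁻¹ * dT v t r ϑ φ :=
  deriv_const_mul_field _

lemma dR_winv (hr : r ≠ 0) (hw : ww M k r ≠ 0)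
    (hv : DifferentiableAt ℝ (fun s => v t s ϑ φ) r) :
    dR (winv M k v) t r ϑ φ
      = -(((6 * M - 2 * r) / r ^ 4 : ℝ) : ℂ) / ((ww M k r : ℝ) : ℂ) ^ 2 * v t r ϑ φ
        + ((ww M k r : ℝ) : ℂ)⁻¹ * dR v t r ϑ φ :=
  ((hasDerivAt_ww_inv M k hr hw).mul hv.hasDerivAt).deriv

lemma opL_winv (hr : r ≠ 0) (hw : ww M k r ≠ 0)
    (hv : DifferentiableAt ℝ (fun s => v t s ϑ φ) r) :
    opL M k (winv M k v) t r ϑ φ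
      = winv M k (opL M k v) t r ϑ φ
        - ((wwP M k r / ww M k r : ℝ) : ℂ) * winv M k v t r ϑ φ := by
  have hwC : ((ww M k r : ℝ) : ℂ) ≠ 0 := by exact_mod_cast hw
  rw [opL_apply, dT_winv, dR_winv hr hw hv, winv_apply, winv_apply, opL_apply,
    Complex.ofReal_div (wwP M k r), ← Del_div_sq_mul_deriv_ww]
  field_simp
  ring

lemma opLb_winv (hr : r ≠ 0) (hw : ww M k r ≠ 0)
    (hv : DifferentiableAt ℝ (fun s => v t s ϑ φ) r) :
    opLb M k (winv M k v) t r ϑ φ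
      = winv M k (opLb M k v) t r ϑ φ
        + ((wwP M k r / ww M k r : ℝ) : ℂ) * winv M k v t r ϑ φ := by
  have hwC : ((ww M k r : ℝ) : ℂ) ≠ 0 := by exact_mod_cast hw
  rw [opLb_apply, dT_winv, dR_winv hr hw hv, winv_apply, winv_apply, opLb_apply,
    Complex.ofReal_div (wwP M k r), ← Del_div_sq_mul_deriv_ww]
  field_simp
  ring

end Operators

theorem statement1_general
    (M k rp : ℝ) (hrp : 0 < rp)
    (hroot : rp + k ^ 2 * rp ^ 3 - 2 * M = 0)
    (u : F4) (hu : SmoothOnOm rp u) :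
    ∀ t r ϑ φ : ℝ, (t, r, ϑ, φ) ∈ OmSet rp →
      Tp M k u t r ϑ φ =
        -((ww M k r : ℝ) : ℂ) *
          (opL M k (winv M k (opLb M k u)) t r ϑ φ
            - ((wwP M k r / ww M k r : ℝ) : ℂ) * winv M k (opLb M k u) t r ϑ φ
            + (angP u t r ϑ φ - 2 * u t r ϑ φ + ((6 * M / r : ℝ) : ℂ) * u t r ϑ φ))
      ∧
      Tm M k u t r ϑ φ =
        -((ww M k r : ℝ) : ℂ) *
          (opLb M k (winv M k (opL M k u)) t r ϑ φ
            + ((wwP M k r / ww M k r : ℝ) : ℂ) * winv M k (opL M k u) t r ϑ φ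
            + (angM u t r ϑ φ - 2 * u t r ϑ φ + ((6 * M / r : ℝ) : ℂ) * u t r ϑ φ)) := by
  intro t r ϑ φ hp
  have hr : r ≠ 0 := (hrp.trans hp.1).ne'
  have hw : ww M k r ≠ 0 := (ww_pos hrp hroot hp.1).ne'
  have hwC : ((ww M k r : ℝ) : ℂ) ≠ 0 := by exact_mod_cast hw
  constructor
  · rw [opL_winv hr hw (hu.differentiableAt_opLb hp hr), winv_apply, winv_apply]
    simp only [Tp]
    field_simp
    ring
  · rw [opLb_winv hr hw (hu.differentiableAt_opL hp hr), winv_apply, winv_apply,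
      ← opL_opLb_comm hu hp hr]
    simp only [Tm]
    field_simp
    ring

/-- The Teukolsky operators factor through the first Chandrasekhar
transformation:
`𝔗⁽⁺²⁾u = −w(L(w⁻¹L̲u) − (w′/w)(w⁻¹L̲u) + (𝓛⁽⁺²⁾ − 2 + 6M/r)u)` and
`𝔗⁽⁻²⁾u = −w(L̲(w⁻¹Lu) + (w′/w)(w⁻¹Lu) + (𝓛⁽⁻²⁾ − 2 + 6M/r)u)` on `Ω`. -/
theorem statement1
    (M k rp : ℝ) (hM : 0 < M) (hk : 0 < k) (hrp : 0 < rp)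
    (hroot : rp + k ^ 2 * rp ^ 3 - 2 * M = 0)
    (u : F4) (hu : SmoothOnOm rp u) :
    ∀ t r ϑ φ : ℝ, (t, r, ϑ, φ) ∈ OmSet rp →
      Tp M k u t r ϑ φ =
        -((ww M k r : ℝ) : ℂ) *
          (opL M k (winv M k (opLb M k u)) t r ϑ φ
            - ((wwP M k r / ww M k r : ℝ) : ℂ) * winv M k (opLb M k u) t r ϑ φ
            + (angP u t r ϑ φ - 2 * u t r ϑ φ + ((6 * M / r : ℝ) : ℂ) * u t r ϑ φ))
      ∧
      Tm M k u t r ϑ φ =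
        -((ww M k r : ℝ) : ℂ) *
          (opLb M k (winv M k (opL M k u)) t r ϑ φ
            + ((wwP M k r / ww M k r : ℝ) : ℂ) * winv M k (opL M k u) t r ϑ φ
            + (angM u t r ϑ φ - 2 * u t r ϑ φ + ((6 * M / r : ℝ) : ℂ) * u t r ϑ φ)) :=
  statement1_general M k rp hrp hroot u hu

end Grav
end
end

section
/- For every smooth complex-valued function f on (0,π)×ℝ (coordinates (ϑ,φ)) the following commutation identities of the spin-lowering and spin-raising operators hold at every point: 𝓛₂†𝓛₋₁f = 𝓛₀𝓛₁†f + 2f, 𝓛₁†𝓛₀f = 𝓛₁𝓛₀†f, and 𝓛₀†𝓛₁f = 𝓛₂𝓛₋₁†f − 2f. -/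
/- Spin-raising and spin-lowering operators on functions f(ϑ, φ) on (0,π) × ℝ. -/

noncomputable section

open Filter Topology Set

namespace Ang

abbrev F2 : Type := ℝ → ℝ → ℂ

/-- `∂_ϑ`. -/
def dTh (f : F2) : F2 := fun ϑ φ => deriv (fun x => f x φ) ϑ
/-- `∂_φ`. -/
def dPh (f : F2) : F2 := fun ϑ φ => deriv (fun y => f ϑ y) φ

/-- `𝓛ₙ f = ∂_ϑ f + (i/sin ϑ)∂_φ f + n cot ϑ · f`. -/
def Lo (n : ℤ) (f : F2) : F2 := fun ϑ φ =>
  dTh f ϑ φ + Complex.I * (Real.sin ϑ : ℂ)⁻¹ * dPh f ϑ φ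
    + (n : ℂ) * ((Real.cos ϑ / Real.sin ϑ : ℝ) : ℂ) * f ϑ φ

/-- `𝓛ₙ† f = ∂_ϑ f − (i/sin ϑ)∂_φ f + n cot ϑ · f`. -/
def Ld (n : ℤ) (f : F2) : F2 := fun ϑ φ =>
  dTh f ϑ φ - Complex.I * (Real.sin ϑ : ℂ)⁻¹ * dPh f ϑ φ
    + (n : ℂ) * ((Real.cos ϑ / Real.sin ϑ : ℝ) : ℂ) * f ϑ φ

/-- `f` is smooth on `(0,π) × ℝ`. -/
def Smooth2 (f : F2) : Prop :=
  ContDiffOn ℝ (⊤ : ℕ∞) (fun p : ℝ × ℝ => f p.1 p.2)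
    (Set.Ioo 0 Real.pi ×ˢ (Set.univ : Set ℝ))

/-! Both `𝓛ₙ` and `𝓛ₙ†` are instances of `∂_ϑ + (ε / sin ϑ) ∂_φ + n cot ϑ` (with `ε = ±i`).
Composing two such operators and using the symmetry of the mixed partials of `f`, the product
is an explicit second-order operator whose coefficients are polynomials in `ε, δ, m, n, cot ϑ`
and `1 / sin ϑ`. In each identity the second- and first-order coefficients agree, and the
zeroth-order ones differ by a multiple of `cot² ϑ - 1 / sin² ϑ = -1`. -/

theorem _root_.HasFDerivAt.hasDerivAt_slice_fst {E : Type*} [NormedAddCommGroup E]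
    [NormedSpace ℝ E] {h : ℝ × ℝ → E} {h' : ℝ × ℝ →L[ℝ] E} {x y : ℝ}
    (hh : HasFDerivAt h h' (x, y)) : HasDerivAt (fun t => h (t, y)) (h' (1, 0)) x :=
  hh.comp_hasDerivAt x ((hasDerivAt_id x).prodMk (hasDerivAt_const x y))

theorem _root_.HasFDerivAt.hasDerivAt_slice_snd {E : Type*} [NormedAddCommGroup E]
    [NormedSpace ℝ E] {h : ℝ × ℝ → E} {h' : ℝ × ℝ →L[ℝ] E} {x y : ℝ}
    (hh : HasFDerivAt h h' (x, y)) : HasDerivAt (fun t => h (x, t)) (h' (0, 1)) y :=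
  hh.comp_hasDerivAt y ((hasDerivAt_const y x).prodMk (hasDerivAt_id y))

theorem sin_ne_zero_of_mem_Ioo {x : ℝ} (hx : x ∈ Ioo 0 Real.pi) : Real.sin x ≠ 0 :=
  (Real.sin_pos_of_pos_of_lt_pi hx.1 hx.2).ne'

theorem hasDerivAt_inv_sin {x : ℝ} (hx : Real.sin x ≠ 0) :
    HasDerivAt (fun t : ℝ => (Real.sin t : ℂ)⁻¹)
      (-((Real.cos x / Real.sin x : ℝ) : ℂ) * (Real.sin x : ℂ)⁻¹) x := by
  convert ((Real.hasDerivAt_sin x).inv hx).ofReal_comp using 1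
  · ext t
    simp
  · push_cast
    ring

theorem hasDerivAt_cot {x : ℝ} (hx : Real.sin x ≠ 0) :
    HasDerivAt (fun t : ℝ => ((Real.cos t / Real.sin t : ℝ) : ℂ))
      (-(Real.sin x : ℂ)⁻¹ ^ 2) x := by
  have h : (-Real.sin x * Real.sin x - Real.cos x * Real.cos x) / Real.sin x ^ 2
      = -(Real.sin x)⁻¹ ^ 2 := by
    field_simp
    linear_combination -Real.sin_sq_add_cos_sq x
  have hd := ((Real.hasDerivAt_cos x).div (Real.hasDerivAt_sin x) hx).ofReal_comp
  rw [h] at hd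
  exact_mod_cast hd

theorem cot_sq_sub_inv_sin_sq {x : ℝ} (hx : Real.sin x ≠ 0) :
    ((Real.cos x / Real.sin x : ℝ) : ℂ) ^ 2 - (Real.sin x : ℂ)⁻¹ ^ 2 = -1 := by
  have h : (Real.cos x / Real.sin x) ^ 2 - (Real.sin x)⁻¹ ^ 2 = -1 := by
    field_simp
    linear_combination Real.sin_sq_add_cos_sq x
  exact_mod_cast congrArg ((↑) : ℝ → ℂ) h

namespace Smooth2

variable {f : F2} {ϑ : ℝ}

theorem contDiffAt (hf : Smooth2 f) (hϑ : ϑ ∈ Ioo 0 Real.pi) (φ : ℝ) :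
    ContDiffAt ℝ (⊤ : ℕ∞) (fun p : ℝ × ℝ => f p.1 p.2) (ϑ, φ) :=
  ContDiffOn.contDiffAt hf ((isOpen_Ioo.prod isOpen_univ).mem_nhds ⟨hϑ, trivial⟩)

theorem hasFDerivAt (hf : Smooth2 f) (hϑ : ϑ ∈ Ioo 0 Real.pi) (φ : ℝ) :
    HasFDerivAt (fun p : ℝ × ℝ => f p.1 p.2)
      (fderiv ℝ (fun p : ℝ × ℝ => f p.1 p.2) (ϑ, φ)) (ϑ, φ) :=
  ((hf.contDiffAt hϑ φ).differentiableAt (by simp)).hasFDerivAt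

theorem dTh_eq_fderiv (hf : Smooth2 f) (hϑ : ϑ ∈ Ioo 0 Real.pi) (φ : ℝ) :
    dTh f ϑ φ = fderiv ℝ (fun p : ℝ × ℝ => f p.1 p.2) (ϑ, φ) (1, 0) :=
  (hf.hasFDerivAt hϑ φ).hasDerivAt_slice_fst.deriv

theorem dPh_eq_fderiv (hf : Smooth2 f) (hϑ : ϑ ∈ Ioo 0 Real.pi) (φ : ℝ) :
    dPh f ϑ φ = fderiv ℝ (fun p : ℝ × ℝ => f p.1 p.2) (ϑ, φ) (0, 1) :=
  (hf.hasFDerivAt hϑ φ).hasDerivAt_slice_snd.deriv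

theorem hasDerivAt_dTh (hf : Smooth2 f) (hϑ : ϑ ∈ Ioo 0 Real.pi) (φ : ℝ) :
    HasDerivAt (fun x => f x φ) (dTh f ϑ φ) ϑ :=
  hf.dTh_eq_fderiv hϑ φ ▸ (hf.hasFDerivAt hϑ φ).hasDerivAt_slice_fst

theorem hasDerivAt_dPh (hf : Smooth2 f) (hϑ : ϑ ∈ Ioo 0 Real.pi) (φ : ℝ) :
    HasDerivAt (fun y => f ϑ y) (dPh f ϑ φ) φ :=
  hf.dPh_eq_fderiv hϑ φ ▸ (hf.hasFDerivAt hϑ φ).hasDerivAt_slice_snd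

theorem dPh_dTh (hf : Smooth2 f) (hϑ : ϑ ∈ Ioo 0 Real.pi) (φ : ℝ) :
    dPh (dTh f) ϑ φ = dTh (dPh f) ϑ φ := by
  set B := fderiv ℝ (fderiv ℝ (fun p : ℝ × ℝ => f p.1 p.2)) (ϑ, φ)
  have hB : HasFDerivAt (fderiv ℝ (fun p : ℝ × ℝ => f p.1 p.2)) B (ϑ, φ) :=
    (((hf.contDiffAt hϑ φ).fderiv_right (m := (⊤ : ℕ∞)) (by simp)).differentiableAt
      (by simp)).hasFDerivAt
  have hPh : HasDerivAt (fun y => dTh f ϑ y) (B (0, 1) (1, 0)) φ := by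
    rw [funext (hf.dTh_eq_fderiv hϑ)]
    exact (ContinuousLinearMap.apply ℝ ℂ ((1 : ℝ), (0 : ℝ))).hasFDerivAt.comp_hasDerivAt φ
      hB.hasDerivAt_slice_snd
  have hTh : HasDerivAt (fun x => dPh f x φ) (B (1, 0) (0, 1)) ϑ := by
    refine ((ContinuousLinearMap.apply ℝ ℂ ((0 : ℝ), (1 : ℝ))).hasFDerivAt.comp_hasDerivAt ϑ
      hB.hasDerivAt_slice_fst).congr_of_eventuallyEq ?_
    filter_upwards [isOpen_Ioo.mem_nhds hϑ] with x hx using hf.dPh_eq_fderiv hx φ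
  calc dPh (dTh f) ϑ φ = B (0, 1) (1, 0) := hPh.deriv
    _ = B (1, 0) (0, 1) := ((hf.contDiffAt hϑ φ).isSymmSndFDerivAt
        (minSmoothness_of_isRCLikeNormedField.trans_le (WithTop.coe_le_coe.mpr le_top))).eq _ _
    _ = dTh (dPh f) ϑ φ := hTh.deriv.symm

end Smooth2

theorem smooth2_dTh {f : F2} (hf : Smooth2 f) : Smooth2 (dTh f) :=
  ((hf.fderiv_of_isOpen (isOpen_Ioo.prod isOpen_univ) (m := (⊤ : ℕ∞)) (by simp)).clm_apply
    contDiffOn_const).congr fun p hp => hf.dTh_eq_fderiv hp.1 p.2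

theorem smooth2_dPh {f : F2} (hf : Smooth2 f) : Smooth2 (dPh f) :=
  ((hf.fderiv_of_isOpen (isOpen_Ioo.prod isOpen_univ) (m := (⊤ : ℕ∞)) (by simp)).clm_apply
    contDiffOn_const).congr fun p hp => hf.dPh_eq_fderiv hp.1 p.2

def spinOp (ε : ℂ) (n : ℤ) (f : F2) : F2 := fun ϑ φ =>
  dTh f ϑ φ + ε * (Real.sin ϑ : ℂ)⁻¹ * dPh f ϑ φ
    + (n : ℂ) * ((Real.cos ϑ / Real.sin ϑ : ℝ) : ℂ) * f ϑ φ

theorem Lo_eq_spinOp (n : ℤ) (f : F2) : Lo n f = spinOp Complex.I n f := rfl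

theorem Ld_eq_spinOp (n : ℤ) (f : F2) : Ld n f = spinOp (-Complex.I) n f := by
  funext ϑ φ
  simp only [Ld, spinOp]
  ring

theorem Smooth2.spinOp_spinOp {f : F2} (hf : Smooth2 f) {ϑ : ℝ} (hϑ : ϑ ∈ Ioo 0 Real.pi)
    (φ : ℝ) (ε δ : ℂ) (m n : ℤ) :
    spinOp ε m (spinOp δ n f) ϑ φ =
      dTh (dTh f) ϑ φ + (ε + δ) * (Real.sin ϑ : ℂ)⁻¹ * dTh (dPh f) ϑ φ
        + ε * δ * (Real.sin ϑ : ℂ)⁻¹ ^ 2 * dPh (dPh f) ϑ φ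
        + (m + n) * ((Real.cos ϑ / Real.sin ϑ : ℝ) : ℂ) * dTh f ϑ φ
        + (m * δ + ε * n - δ) * ((Real.cos ϑ / Real.sin ϑ : ℝ) : ℂ) * (Real.sin ϑ : ℂ)⁻¹
          * dPh f ϑ φ
        + n * (m * ((Real.cos ϑ / Real.sin ϑ : ℝ) : ℂ) ^ 2 - (Real.sin ϑ : ℂ)⁻¹ ^ 2)
          * f ϑ φ := by
  have hs := sin_ne_zero_of_mem_Ioo hϑ
  have hTh : dTh (spinOp δ n f) ϑ φ = dTh (dTh f) ϑ φ
      + δ * (-((Real.cos ϑ / Real.sin ϑ : ℝ) : ℂ) * (Real.sin ϑ : ℂ)⁻¹ * dPh f ϑ φ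
        + (Real.sin ϑ : ℂ)⁻¹ * dTh (dPh f) ϑ φ)
      + n * (-(Real.sin ϑ : ℂ)⁻¹ ^ 2 * f ϑ φ
        + ((Real.cos ϑ / Real.sin ϑ : ℝ) : ℂ) * dTh f ϑ φ) :=
    ((((smooth2_dTh hf).hasDerivAt_dTh hϑ φ).add (((hasDerivAt_inv_sin hs).const_mul δ).mul
      ((smooth2_dPh hf).hasDerivAt_dTh hϑ φ))).add (((hasDerivAt_cot hs).const_mul _).mul
      (hf.hasDerivAt_dTh hϑ φ))).deriv.trans (by ring)
  have hPh : dPh (spinOp δ n f) ϑ φ = dPh (dTh f) ϑ φ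
      + δ * (Real.sin ϑ : ℂ)⁻¹ * dPh (dPh f) ϑ φ
      + n * ((Real.cos ϑ / Real.sin ϑ : ℝ) : ℂ) * dPh f ϑ φ :=
    ((((smooth2_dTh hf).hasDerivAt_dPh hϑ φ).add
      (((smooth2_dPh hf).hasDerivAt_dPh hϑ φ).const_mul _)).add
      ((hf.hasDerivAt_dPh hϑ φ).const_mul _)).deriv
  simp only [spinOp] at hTh hPh ⊢
  rw [hTh, hPh, hf.dPh_dTh hϑ φ]
  ring

/-- Commutation identities of the spin-lowering and spin-raising
operators: `𝓛₂†𝓛₋₁f = 𝓛₀𝓛₁†f + 2f`, `𝓛₁†𝓛₀f = 𝓛₁𝓛₀†f`, and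
`𝓛₀†𝓛₁f = 𝓛₂𝓛₋₁†f − 2f`, at every point of `(0,π) × ℝ`. -/
theorem statement10 (f : F2) (hf : Smooth2 f) :
    ∀ ϑ ∈ Set.Ioo (0 : ℝ) Real.pi, ∀ φ : ℝ,
      Ld 2 (Lo (-1) f) ϑ φ = Lo 0 (Ld 1 f) ϑ φ + 2 * f ϑ φ
      ∧ Ld 1 (Lo 0 f) ϑ φ = Lo 1 (Ld 0 f) ϑ φ
      ∧ Ld 0 (Lo 1 f) ϑ φ = Lo 2 (Ld (-1) f) ϑ φ - 2 * f ϑ φ := by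
  intro ϑ hϑ φ
  have hcot := cot_sq_sub_inv_sin_sq (sin_ne_zero_of_mem_Ioo hϑ)
  simp only [Lo_eq_spinOp, Ld_eq_spinOp, hf.spinOp_spinOp hϑ φ, Int.cast_ofNat, Int.cast_neg,
    Int.cast_one, Int.cast_zero]
  refine ⟨?_, ?_, ?_⟩
  · linear_combination (-2 * f ϑ φ) * hcot
  · ring
  · linear_combination (2 * f ϑ φ) * hcot

end Ang
end
end
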